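/- arXiv:1810.11340 — 2 statements merged into one kernel-verified Lean document; each statement's English description precedes it below -/
import Mathlib

section
/- Let I be a finite nonempty set, q > 1 a real number, m ≥ 2 an integer, (Nᵢ) and (νᵢ) families of positive integers indexed by I, and ℓ a real number with 0 < ℓ ≤ νᵢ/Nᵢ for all i. Then |∑_{(aᵢ)∈A} q^{-∑ νᵢ(aᵢ+1)}| ≤ q^{-(m-1)ℓ + σ} · m^{|I|-1}, where A = {(aᵢ) ∈ ℕ^I : ∑ Nᵢ(aᵢ+1) = m-1} and σ = -∑_{i∈I}(νᵢ - Nᵢℓ). -/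
open Finset

theorem stmt_6 (ι : Type*) [Fintype ι] [Nonempty ι] (q : ℝ) (hq : 1 < q)
    (m : ℕ) (hm : 2 ≤ m) (N ν : ι → ℕ) (hN : ∀ i, 0 < N i) (hν : ∀ i, 0 < ν i)
    (ℓ : ℝ) (hℓ : 0 < ℓ) (hℓν : ∀ i, ℓ ≤ (ν i : ℝ) / N i) :
    |∑ᶠ a ∈ {a : ι → ℕ | ∑ i, N i * (a i + 1) = m - 1},
        q ^ (-∑ i, (ν i : ℝ) * (a i + 1))| ≤
      q ^ (-((m : ℝ) - 1) * ℓ + (-∑ i, ((ν i : ℝ) - N i * ℓ))) * (m : ℝ) ^ (Fintype.card ι - 1) := by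
  classical
  obtain ⟨i₀⟩ := ‹Nonempty ι›
  have hq0 : (0:ℝ) < q := lt_trans one_pos hq
  set C : ℝ := q ^ (-((m : ℝ) - 1) * ℓ + (-∑ i, ((ν i : ℝ) - N i * ℓ))) with hC
  have hC0 : 0 < C := Real.rpow_pos_of_pos hq0 _
  set S : Finset (ι → ℕ) := (Fintype.piFinset fun _ : ι => Finset.range m).filter
      (fun a => ∑ i, N i * (a i + 1) = m - 1) with hS
  have hset : {a : ι → ℕ | ∑ i, N i * (a i + 1) = m - 1} = ↑S := by
    ext a
    simp only [hS, Set.mem_setOf_eq, coe_filter, Fintype.mem_piFinset, mem_range,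
      Set.mem_setOf_eq]
    constructor
    · intro h
      refine ⟨fun i => ?_, h⟩
      have h1 : N i * (a i + 1) ≤ m - 1 :=
        h ▸ Finset.single_le_sum (f := fun i => N i * (a i + 1))
          (fun _ _ => Nat.zero_le _) (mem_univ i)
      have h2 : a i + 1 ≤ N i * (a i + 1) := Nat.le_mul_of_pos_left _ (hN i)
      omega
    · exact fun h => h.2
  rw [hset, finsum_mem_coe_finset]
  have key : ∀ i, ℓ * N i ≤ (ν i : ℝ) := by
    intro i
    have hNi : (0:ℝ) < N i := by exact_mod_cast hN i
    exact (le_div_iff₀ hNi).mp (hℓν i)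
  have hterm : ∀ a ∈ S, q ^ (-∑ i, (ν i : ℝ) * (a i + 1)) ≤ C := by
    intro a ha
    rw [hC, Real.rpow_le_rpow_left_iff hq]
    have hsum : ∑ i, N i * (a i + 1) = m - 1 := (Finset.mem_filter.mp ha).2
    have hcast : ∑ i, ((N i : ℝ)) * (a i + 1) = (m : ℝ) - 1 := by
      have := congrArg (fun n : ℕ => (n : ℝ)) hsum
      push_cast [Nat.cast_sub (by omega : 1 ≤ m)] at this
      convert this using 2
    have hpt : ∀ i ∈ Finset.univ (α := ι),
        (N i : ℝ) * (a i + 1) * ℓ + ((ν i : ℝ) - N i * ℓ) ≤ (ν i : ℝ) * (a i + 1) := by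
      intro i _
      have h1 := key i
      have hai : (0:ℝ) ≤ (a i : ℝ) := Nat.cast_nonneg _
      nlinarith
    have hmain : ((m:ℝ) - 1) * ℓ + ∑ i, ((ν i : ℝ) - N i * ℓ) ≤ ∑ i, (ν i : ℝ) * (a i + 1) := by
      rw [← hcast, Finset.sum_mul, ← Finset.sum_add_distrib]
      exact Finset.sum_le_sum hpt
    linarith
  have hcard : S.card ≤ m ^ (Fintype.card ι - 1) := by
    have hmap : ∀ a ∈ S, (Function.update a i₀ 0) ∈
        Fintype.piFinset fun i => if i = i₀ then ({0} : Finset ℕ) else Finset.range m := by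
      intro a ha
      have haB : ∀ i, a i < m := by
        have := (Finset.mem_filter.mp ha).1
        simpa [Fintype.mem_piFinset] using this
      rw [Fintype.mem_piFinset]
      intro i
      by_cases hi : i = i₀
      · subst hi; simp [Function.update]
      · simp [Function.update, hi, haB i]
    have hinj : Set.InjOn (fun a : ι → ℕ => Function.update a i₀ 0) (S : Set (ι → ℕ)) := by
      intro a ha b hb hab
      have hrest : ∀ i, i ≠ i₀ → a i = b i := by
        intro i hi
        have := congrFun hab i
        simpa [Function.update, hi] using this
      have hsa : ∑ i, N i * (a i + 1) = m - 1 := (Finset.mem_filter.mp ha).2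
      have hsb : ∑ i, N i * (b i + 1) = m - 1 := (Finset.mem_filter.mp hb).2
      have hsplit_a : ∑ i, N i * (a i + 1)
          = N i₀ * (a i₀ + 1) + ∑ i ∈ Finset.univ.erase i₀, N i * (a i + 1) :=
        (Finset.add_sum_erase Finset.univ (fun i => N i * (a i + 1)) (mem_univ i₀)).symm
      have hsplit_b : ∑ i, N i * (b i + 1)
          = N i₀ * (b i₀ + 1) + ∑ i ∈ Finset.univ.erase i₀, N i * (b i + 1) :=
        (Finset.add_sum_erase Finset.univ (fun i => N i * (b i + 1)) (mem_univ i₀)).symm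
      have hrest_sum : ∑ i ∈ Finset.univ.erase i₀, N i * (a i + 1)
          = ∑ i ∈ Finset.univ.erase i₀, N i * (b i + 1) := by
        refine Finset.sum_congr rfl fun i hi => ?_
        rw [hrest i (Finset.ne_of_mem_erase hi)]
      have hi₀ : a i₀ = b i₀ := by
        have hNpos := hN i₀
        have h1 : N i₀ * (a i₀ + 1) + ∑ i ∈ Finset.univ.erase i₀, N i * (b i + 1) = m - 1 := by
          rw [← hrest_sum, ← hsplit_a]; exact hsa
        have h2 : N i₀ * (b i₀ + 1) + ∑ i ∈ Finset.univ.erase i₀, N i * (b i + 1) = m - 1 := by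
          rw [← hsplit_b]; exact hsb
        have h3 : N i₀ * (a i₀ + 1) = N i₀ * (b i₀ + 1) :=
          Nat.add_right_cancel (h1.trans h2.symm)
        exact Nat.succ_injective (Nat.eq_of_mul_eq_mul_left hNpos h3)
      funext i
      by_cases hi : i = i₀
      · subst hi; exact hi₀
      · exact hrest i hi
    have hle := Finset.card_le_card_of_injOn _ hmap hinj
    have hcard_t : (Fintype.piFinset fun i =>
        if i = i₀ then ({0} : Finset ℕ) else Finset.range m).card = m ^ (Fintype.card ι - 1) := by
      rw [Fintype.card_piFinset]
      have : ∀ i : ι, (if i = i₀ then ({0} : Finset ℕ) else Finset.range m).card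
          = if i = i₀ then 1 else m := by
        intro i; by_cases hi : i = i₀ <;> simp [hi]
      rw [Finset.prod_congr rfl fun i _ => this i]
      rw [← Finset.mul_prod_erase Finset.univ _ (mem_univ i₀), if_pos rfl, one_mul]
      rw [Finset.prod_congr rfl (fun i hi => if_neg (Finset.ne_of_mem_erase hi)),
        Finset.prod_const, Finset.card_erase_of_mem (mem_univ i₀), Finset.card_univ]
    rw [hcard_t] at hle
    exact hle
  calc |∑ a ∈ S, q ^ (-∑ i, (ν i : ℝ) * (a i + 1))|
      ≤ ∑ a ∈ S, |q ^ (-∑ i, (ν i : ℝ) * (a i + 1))| := Finset.abs_sum_le_sum_abs _ _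
    _ = ∑ a ∈ S, q ^ (-∑ i, (ν i : ℝ) * (a i + 1)) := by
        refine Finset.sum_congr rfl fun a _ => abs_of_pos (Real.rpow_pos_of_pos hq0 _)
    _ ≤ ∑ _a ∈ S, C := Finset.sum_le_sum hterm
    _ = (S.card : ℝ) * C := by rw [Finset.sum_const, nsmul_eq_mul]
    _ ≤ ((m ^ (Fintype.card ι - 1) : ℕ) : ℝ) * C := by
        exact mul_le_mul_of_nonneg_right (by exact_mod_cast hcard) hC0.le
    _ = C * (m : ℝ) ^ (Fintype.card ι - 1) := by push_cast; ring
end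

section
/- Let (R, m_R) be a 2-dimensional Noetherian local domain, let g ∈ m_R generate a prime ideal, and let h ∈ m_R be such that the image h̄ of h in A = R/(g) is nonzero and equals u^d for some u in the fraction field of A and some positive integer d, where the integral closure B of A in its fraction field is a finitely generated A-module. Then the length of R/(g,h) as an R-module is at least d. -/
/-!
Put `A = R ⧸ (g)`, `a = h̄ ∈ A` and let `B` be the integral closure of `A` in its fraction field;
then `u ∈ B` and `a = u ^ d`. As `B` is a finite `A`-module, some `t ≠ 0` in `A` satisfies
`t • B ⊆ A`, and as `B` is a Noetherian domain we can write `t = u ^ k * c` with `u ∤ c`.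
The ideals `J j = A ∩ u ^ j B` then decrease strictly for `j ≥ k` (witnessed by `t * u ^ (j - k)`),
and `a ^ n A ⊆ J (n * d)`, so `n * d ≤ k + ℓ(A ⧸ a ^ n A) = k + n * ℓ(A ⧸ a A)` for every `n`.
Hence `d ≤ ℓ(A ⧸ a A) = ℓ_R(R ⧸ (g, h))`.
-/

set_option synthInstance.maxHeartbeats 400000
set_option maxHeartbeats 1000000

/-- The length of an `R`-module `M`, i.e. the supremum of lengths of chains of submodules,
as an element of `WithBot ℕ∞`. -/
noncomputable def moduleLength (R M : Type*) [CommRing R] [AddCommGroup M] [Module R M] :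
    WithBot ℕ∞ :=
  Order.krullDim (Submodule R M)

open Ideal Order

lemma Order.le_add_coheight_of_forall_succ_lt {α : Type*} [Preorder α] {f : ℕ → α} {k : ℕ}
    (hf : ∀ j ≥ k, f (j + 1) < f j) (n : ℕ) : (n : ℕ∞) ≤ k + coheight (f n) := by
  induction n with
  | zero => simp
  | succ n ih =>
    rcases lt_or_ge n k with hnk | hnk
    · exact le_add_right (by exact_mod_cast hnk)
    · calc ((n + 1 : ℕ) : ℕ∞) ≤ k + coheight (f n) + 1 := by push_cast; gcongr
        _ ≤ k + coheight (f (n + 1)) := by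
          rw [add_assoc]
          gcongr
          exact coheight_add_one_le (hf n hnk)

lemma ENat.le_of_forall_mul_le_add {d k : ℕ} {c : ℕ∞}
    (h : ∀ n : ℕ, ((n * d : ℕ) : ℕ∞) ≤ k + n * c) : (d : ℕ∞) ≤ c := by
  induction c with
  | top => exact le_top
  | coe c =>
    have hk : (k + 1) * d ≤ k + (k + 1) * c := by exact_mod_cast h (k + 1)
    exact_mod_cast (show d ≤ c by nlinarith)

theorem Subalgebra.exists_ne_zero_forall_algebraMap_eq_smul {A K : Type*} [CommRing A]
    [IsDomain A] [Field K] [Algebra A K] [IsFractionRing A K] (B : Subalgebra A K)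
    [Module.Finite A B] : ∃ t : A, t ≠ 0 ∧ ∀ b : B, ∃ r : A, algebraMap A B r = t • b := by
  obtain ⟨t, ht, hint⟩ := FractionalIdeal.isFractional_of_fg (S := nonZeroDivisors A)
    (Module.Finite.iff_fg.mp ‹_› : (Subalgebra.toSubmodule B).FG)
  refine ⟨t, nonZeroDivisors.ne_zero ht, fun b => ?_⟩
  obtain ⟨r, hr⟩ := hint b b.2
  exact ⟨r, Subtype.ext hr⟩

section

variable {A B : Type*} [CommRing A] [CommRing B] [Algebra A B]

lemma exists_forall_ge_algebraMap_eq_pow_mul [IsDomain B] [WfDvdMonoid B] [FaithfulSMul A B]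
    {t : A} (ht : t ≠ 0) (hcond : ∀ b : B, ∃ r : A, algebraMap A B r = t • b) {v : B}
    (hv : ¬IsUnit v) :
    ∃ (k : ℕ) (c : B), ¬v ∣ c ∧ ∀ j ≥ k, ∃ r : A, algebraMap A B r = v ^ j * c := by
  obtain ⟨k, c, hc, htc⟩ := WfDvdMonoid.max_power_factor'
    ((map_ne_zero_iff _ (FaithfulSMul.algebraMap_injective A B)).mpr ht) hv
  refine ⟨k, c, hc, fun j hj => ?_⟩
  obtain ⟨r, hr⟩ := hcond (v ^ (j - k))
  refine ⟨r, ?_⟩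
  rw [hr, Algebra.smul_def, htc, ← Nat.sub_add_cancel hj, pow_add, Nat.add_sub_cancel]
  ring

lemma Ideal.comap_span_pow_succ_lt [IsDomain B] {v c : B} (hv : v ≠ 0) (hc : ¬v ∣ c) {j : ℕ}
    {r : A} (hr : algebraMap A B r = v ^ j * c) :
    (span {v ^ (j + 1)}).comap (algebraMap A B) < (span {v ^ j}).comap (algebraMap A B) := by
  refine SetLike.lt_iff_le_and_exists.mpr ⟨comap_mono ?_, r, ?_, ?_⟩
  · exact span_singleton_le_span_singleton.mpr (pow_dvd_pow v j.le_succ)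
  · simp [mem_span_singleton, hr]
  · rwa [mem_comap, mem_span_singleton, hr, pow_succ', mul_comm v,
      mul_dvd_mul_iff_left (pow_ne_zero j hv)]

theorem Ring.le_ord_of_algebraMap_eq_pow [IsDomain A] [IsNoetherianRing A] [IsDomain B]
    [Module.Finite A B] [FaithfulSMul A B]
    (hcond : ∃ t : A, t ≠ 0 ∧ ∀ b : B, ∃ r : A, algebraMap A B r = t • b)
    {a : A} (ha0 : a ≠ 0) (ha : ¬IsUnit a) {v : B} {d : ℕ} (hd : 0 < d)
    (hv : algebraMap A B a = v ^ d) : (d : ℕ∞) ≤ Ring.ord A a := by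
  have : IsNoetherianRing B := isNoetherian_of_tower A inferInstance
  obtain ⟨t, ht, hcond⟩ := hcond
  have hv_unit : ¬IsUnit v := fun h => ha ((isUnit_map_iff (algebraMap A B) a).mp (hv ▸ h.pow d))
  have hv0 : v ≠ 0 := ne_zero_pow hd.ne' <|
    hv ▸ (map_ne_zero_iff _ (FaithfulSMul.algebraMap_injective A B)).mpr ha0
  obtain ⟨k, c, hc, hr⟩ := exists_forall_ge_algebraMap_eq_pow_mul ht hcond hv_unit
  set J : ℕ → Ideal A := fun j => (span {v ^ j}).comap (algebraMap A B)
  have hJ : ∀ j ≥ k, J (j + 1) < J j := fun j hj =>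
    let ⟨_, hr⟩ := hr j hj
    comap_span_pow_succ_lt hv0 hc hr
  refine ENat.le_of_forall_mul_le_add (k := k) fun n => ?_
  have ha_pow : span {a ^ n} ≤ J (n * d) := by
    rw [span_singleton_le_iff_mem, mem_comap, mem_span_singleton, map_pow, hv, ← pow_mul,
      mul_comm]
  calc ((n * d : ℕ) : ℕ∞) ≤ k + coheight (J (n * d)) := le_add_coheight_of_forall_succ_lt hJ _
    _ ≤ k + coheight (span {a ^ n}) := by gcongr
    _ = k + n * Ring.ord A a := by
      rw [← Module.length_quotient, ← Ring.ord, Ring.ord_pow (mem_nonZeroDivisors_of_ne_zero ha0),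
        nsmul_eq_mul]

end

theorem Ring.ord_mk_eq_length_quotient_span_pair {R : Type*} [CommRing R] (g h : R) :
    Ring.ord (R ⧸ span {g}) (Ideal.Quotient.mk (span {g}) h) =
      Module.length R (R ⧸ span {g, h}) := by
  have e : ((R ⧸ span {g}) ⧸ span {Ideal.Quotient.mk (span {g}) h}) ≃ₐ[R] R ⧸ span {g, h} :=
    (quotientEquivAlgOfEq R (by rw [map_span, Set.image_singleton]; rfl)).trans
      ((DoubleQuot.quotQuotEquivQuotSupₐ R (span {g}) (span {h})).trans
        (quotientEquivAlgOfEq R (by rw [← span_union, Set.singleton_union])))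
  rw [Ring.ord, ← Module.length_eq_of_surjective (R := R ⧸ span {g}) Ideal.Quotient.mk_surjective,
    e.toLinearEquiv.length_eq]

theorem stmt_7_general (R : Type*) [CommRing R] [IsLocalRing R] [IsNoetherianRing R]
    (g h : R) (hh : h ∈ IsLocalRing.maximalIdeal R)
    [hgprime : (Ideal.span {g}).IsPrime]
    (hbar : (Ideal.Quotient.mk (Ideal.span {g})) h ≠ 0)
    (hBfg : Module.Finite (R ⧸ Ideal.span {g})
      (integralClosure (R ⧸ Ideal.span {g}) (FractionRing (R ⧸ Ideal.span {g}))))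
    (d : ℕ) (hd : 0 < d)
    (u : FractionRing (R ⧸ Ideal.span {g}))
    (hu : algebraMap (R ⧸ Ideal.span {g}) (FractionRing (R ⧸ Ideal.span {g}))
      ((Ideal.Quotient.mk (Ideal.span {g})) h) = u ^ d) :
    (d : WithBot ℕ∞) ≤ moduleLength R (R ⧸ Ideal.span {g, h}) := by
  set A := R ⧸ span {g}
  set B := integralClosure A (FractionRing A)
  have : IsLocalHom (Ideal.Quotient.mk (span {g})) := .of_surjective _ Ideal.Quotient.mk_surjective
  have ha : ¬IsUnit (Ideal.Quotient.mk (span {g}) h) := by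
    rwa [isUnit_map_iff, ← mem_nonunits_iff, ← IsLocalRing.mem_maximalIdeal]
  let v : B := ⟨u, IsIntegral.of_pow hd (hu ▸ isIntegral_algebraMap)⟩
  have hv : algebraMap A B (Ideal.Quotient.mk (span {g}) h) = v ^ d := Subtype.ext hu
  have hle :=
    Ring.le_ord_of_algebraMap_eq_pow B.exists_ne_zero_forall_algebraMap_eq_smul hbar ha hd hv
  rw [moduleLength, ← Module.coe_length, ← Ring.ord_mk_eq_length_quotient_span_pair]
  exact_mod_cast hle

theorem stmt_7 (R : Type*) [CommRing R] [IsDomain R] [IsLocalRing R] [IsNoetherianRing R]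
    (hdim : ringKrullDim R = 2)
    (g h : R) (hg : g ∈ IsLocalRing.maximalIdeal R) (hh : h ∈ IsLocalRing.maximalIdeal R)
    [hgprime : (Ideal.span {g}).IsPrime]
    (hbar : (Ideal.Quotient.mk (Ideal.span {g})) h ≠ 0)
    (hBfg : Module.Finite (R ⧸ Ideal.span {g})
      (integralClosure (R ⧸ Ideal.span {g}) (FractionRing (R ⧸ Ideal.span {g}))))
    (d : ℕ) (hd : 0 < d)
    (u : FractionRing (R ⧸ Ideal.span {g}))
    (hu : algebraMap (R ⧸ Ideal.span {g}) (FractionRing (R ⧸ Ideal.span {g}))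
      ((Ideal.Quotient.mk (Ideal.span {g})) h) = u ^ d) :
    (d : WithBot ℕ∞) ≤ moduleLength R (R ⧸ Ideal.span {g, h}) :=
  stmt_7_general R g h hh (hgprime := hgprime) hbar hBfg d hd u hu
end
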